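/- There exists a Δ⁰₂ function F : ℕ → ℕ that is not in any level Σ*ₙ or Π*ₙ of the oscillation hierarchy; that is, the oscillation hierarchy does not exhaust the limit computable functions. -/

import Mathlib

mutual
/-- Stage sequences admissible for level `Σ*ₙ` of the oscillation hierarchy:
at most `n` monotone phases, beginning by going up. -/
def SigmaSeq : ℕ → (ℕ → ℕ) → Prop
  | 0, _ => False
  | 1, g => Monotone g
  | n+2, g => ∃ s, (∀ i j, i ≤ j → j ≤ s → g i ≤ g j) ∧ PiSeq (n+1) fun t => g (s + t)
/-- Stage sequences admissible for level `Π*ₙ`: beginning by going down. -/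
def PiSeq : ℕ → (ℕ → ℕ) → Prop
  | 0, _ => False
  | 1, g => Antitone g
  | n+2, g => ∃ s, (∀ i j, i ≤ j → j ≤ s → g j ≤ g i) ∧ SigmaSeq (n+1) fun t => g (s + t)
end

/-- `F ∈ Σ*ₙ`. -/
def InSigma (n : ℕ) (F : ℕ → ℕ) : Prop :=
  ∃ f : ℕ → ℕ → ℕ, Computable₂ f ∧
    ∀ x, SigmaSeq n (f x) ∧ ∃ s, ∀ t, s ≤ t → f x t = F x

/-- `F ∈ Π*ₙ`. -/
def InPi (n : ℕ) (F : ℕ → ℕ) : Prop :=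
  ∃ f : ℕ → ℕ → ℕ, Computable₂ f ∧
    ∀ x, PiSeq n (f x) ∧ ∃ s, ∀ t, s ≤ t → f x t = F x


/-!
For each program `e`, level `n` and parity `b`, the index `x = ⟪e, ⟪n, b⟫⟫` carries a limit
computable guess that starts at parity `b` and flips whenever the approximation computed by `e`
agrees with it at `x`, at most `n + 1` times. If that approximation converges to the final guess,
it must have forced all `n + 1` flips, so it takes the values `b, b + 1, b + 2, …` (mod 2) at
`n + 1` increasing stages. With `b = 1` these are `n` changes beginning with a descent, which no
sequence with `n` monotone phases beginning upwards (`Σ*ₙ`) can make; dually with `b = 0` for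
`Π*ₙ`.
-/

open Filter Set Nat.Partrec Nat.Partrec.Code

def Alternates (g : ℕ → ℕ) (b n : ℕ) : Prop :=
  ∃ t : ℕ → ℕ, StrictMonoOn t (Iio n) ∧ ∀ i < n, g (t i) = (b + i) % 2

/-- The first alternation cannot happen within the phase `[0, s]`, so the others all happen
after `s`. -/
theorem Alternates.drop_phase {g : ℕ → ℕ} {b n s : ℕ} {R : ℕ → ℕ → Prop}
    (ha : Alternates g b (n + 2)) (hphase : ∀ i j, i ≤ j → j ≤ s → R (g i) (g j))
    (hR : ¬ R (b % 2) ((b + 1) % 2)) : Alternates (fun u => g (s + u)) (b + 1) (n + 1) := by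
  obtain ⟨t, ht, hv⟩ := ha
  have ht01 : t 0 < t 1 := ht (by simp) (by simp) zero_lt_one
  have hs : s < t 1 := by
    by_contra! h
    have := hphase (t 0) (t 1) ht01.le h
    rw [hv 0 (by omega), hv 1 (by omega)] at this
    exact hR this
  have hst : ∀ i < n + 1, s < t (i + 1) := fun i hi =>
    hs.trans_le (ht.monotoneOn (by simp) (by simp; omega) (by omega))
  refine ⟨fun i => t (i + 1) - s, fun i hi j hj hij => ?_, fun i hi => ?_⟩
  · have := ht (by simp at hi ⊢; omega) (by simp at hj ⊢; omega) (by omega : i + 1 < j + 1)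
    have := hst i hi
    have := hst j hj
    dsimp only
    omega
  · have := hst i hi
    dsimp only
    rw [Nat.add_sub_cancel' this.le, hv (i + 1) (by omega)]
    omega

theorem sigmaSeq_piSeq_mod_two_of_alternates (n : ℕ) : ∀ g b,
    (SigmaSeq (n + 1) g → Alternates g b (n + 2) → b % 2 = 0) ∧
    (PiSeq (n + 1) g → Alternates g b (n + 2) → b % 2 = 1) := by
  induction n with
  | zero =>
    refine fun g b => ⟨fun hg ⟨t, ht, hv⟩ => ?_, fun hg ⟨t, ht, hv⟩ => ?_⟩ <;>
    · have := hg (ht (by simp) (by simp) zero_lt_one).le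
      rw [hv 0 (by omega), hv 1 (by omega)] at this
      omega
  | succ m ih =>
    refine fun g b => ⟨fun ⟨s, hup, hpi⟩ ha => ?_, fun ⟨s, hdown, hsigma⟩ ha => ?_⟩
    · by_contra hb
      have := (ih _ (b + 1)).2 hpi (ha.drop_phase hup (by omega))
      omega
    · by_contra hb
      have := (ih _ (b + 1)).1 hsigma (ha.drop_phase (R := fun x y => y ≤ x) hdown (by omega))
      omega

theorem SigmaSeq.mod_two_eq_zero_of_alternates {n : ℕ} {g : ℕ → ℕ} {b : ℕ}
    (hg : SigmaSeq n g) (ha : Alternates g b (n + 1)) : b % 2 = 0 := by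
  cases n with
  | zero => exact hg.elim
  | succ n => exact (sigmaSeq_piSeq_mod_two_of_alternates n g b).1 hg ha

theorem PiSeq.mod_two_eq_one_of_alternates {n : ℕ} {g : ℕ → ℕ} {b : ℕ}
    (hg : PiSeq n g) (ha : Alternates g b (n + 1)) : b % 2 = 1 := by
  cases n with
  | zero => exact hg.elim
  | succ n => exact (sigmaSeq_piSeq_mod_two_of_alternates n g b).2 hg ha

/-- Reading the outputs of a program, a counter flips the current parity `(st + c) % 2` whenever
the program outputs it, at most `cap` times. -/
def flipStep (cap st c : ℕ) (o : Option ℕ) : ℕ :=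
  if c < cap ∧ o = some ((st + c) % 2) then c + 1 else c

def flipCount (cap st : ℕ) (h : ℕ → Option ℕ) : ℕ → ℕ
  | 0 => 0
  | k + 1 => flipStep cap st (flipCount cap st h k) (h k)

section FlipCount

variable {cap st : ℕ} {h : ℕ → Option ℕ}

theorem flipCount_succ (k : ℕ) :
    flipCount cap st h (k + 1) = flipStep cap st (flipCount cap st h k) (h k) := rfl

theorem flipCount_le_cap (k : ℕ) : flipCount cap st h k ≤ cap := by
  induction k with
  | zero => exact Nat.zero_le _
  | succ k ih => rw [flipCount_succ, flipStep]; split_ifs <;> omega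

theorem flipCount_monotone : Monotone (flipCount cap st h) :=
  monotone_nat_of_le_succ fun k => by rw [flipCount_succ, flipStep]; split_ifs <;> omega

theorem exists_eventually_flipCount_eq (cap st : ℕ) (h : ℕ → Option ℕ) :
    ∃ c, ∀ᶠ k in atTop, flipCount cap st h k = c := by
  have hbdd : BddAbove (range (flipCount cap st h)) :=
    ⟨cap, by rintro _ ⟨k, rfl⟩; exact flipCount_le_cap k⟩
  have := tendsto_atTop_ciSup flipCount_monotone hbdd
  rw [nhds_discrete, tendsto_pure] at this
  exact ⟨_, this⟩

theorem eventually_flipStep_eq {c : ℕ} (hc : ∀ᶠ k in atTop, flipCount cap st h k = c) :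
    ∀ᶠ k in atTop, flipStep cap st c (h k) = c := by
  filter_upwards [hc, tendsto_add_atTop_nat 1 hc]
    with k hk (hk1 : flipCount cap st h (k + 1) = c)
  rwa [flipCount_succ, hk] at hk1

theorem flipCount_eq_of_flipStep_eq {K : ℕ}
    (hK : ∀ k ≥ K, flipStep cap st (flipCount cap st h K) (h k) = flipCount cap st h K) :
    ∀ k ≥ K, flipCount cap st h k = flipCount cap st h K := by
  intro k hk
  induction k, hk using Nat.le_induction with
  | base => rfl
  | succ k hk ih => rw [flipCount_succ, ih, hK k hk]

theorem exists_flip_stages (k : ℕ) : ∃ t : ℕ → ℕ, StrictMonoOn t (Iio (flipCount cap st h k)) ∧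
    ∀ i < flipCount cap st h k, t i < k ∧ h (t i) = some ((st + i) % 2) := by
  induction k with
  | zero => exact ⟨id, strictMono_id.strictMonoOn _, by simp [flipCount]⟩
  | succ k ih =>
    obtain ⟨t, ht, hv⟩ := ih
    rw [flipCount_succ, flipStep]
    split_ifs with hflip
    · refine ⟨fun i => if i < flipCount cap st h k then t i else k, ?_, fun i hi => ?_⟩
      · intro i hi j hj hij
        simp only [mem_Iio] at hi hj
        by_cases hjc : j < flipCount cap st h k
        · simp only [hjc, lt_trans hij hjc, if_true]
          exact ht (mem_Iio.2 (lt_trans hij hjc)) (mem_Iio.2 hjc) hij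
        · simp only [hjc, show i < flipCount cap st h k by omega, if_true, if_false]
          exact (hv i (by omega)).1
      · by_cases hic : i < flipCount cap st h k
        · simp only [hic, if_true]
          exact ⟨(hv i hic).1.trans (Nat.lt_succ_self k), (hv i hic).2⟩
        · simp only [hic, if_false]
          exact ⟨Nat.lt_succ_self k, by rw [show i = flipCount cap st h k by omega]; exact hflip.2⟩
    · exact ⟨t, ht, fun i hi => ⟨(hv i hi).1.trans (Nat.lt_succ_self k), (hv i hi).2⟩⟩

theorem alternates_flipCount {g : ℕ → ℕ} (hg : ∀ k, h k = some (g k)) (k : ℕ) :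
    Alternates g st (flipCount cap st h k) := by
  obtain ⟨t, ht, hv⟩ := exists_flip_stages (cap := cap) (st := st) (h := h) k
  exact ⟨t, ht, fun i hi => Option.some_injective _ ((hg _).symm.trans (hv i hi).2)⟩

theorem eventually_flipCount_stage_eq {H : ℕ → ℕ → Option ℕ}
    (hsound : ∀ s k v, H s k = some v → h k = some v)
    (hcomplete : ∀ k, ∀ᶠ s in atTop, H s k = h k) {c : ℕ}
    (hc : ∀ᶠ k in atTop, flipCount cap st h k = c) :
    ∀ᶠ s in atTop, flipCount cap st (H s) s = c := by
  obtain ⟨K, hK⟩ := eventually_atTop.1 (hc.and (eventually_flipStep_eq hc))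
  have hagree : ∀ᶠ s in atTop, ∀ k ∈ Iio K, H s k = h k :=
    (eventually_all_finite (finite_Iio K)).2 fun k _ => hcomplete k
  filter_upwards [hagree, eventually_ge_atTop K] with s hs hKs
  have hbelow : ∀ k ≤ K, flipCount cap st (H s) k = flipCount cap st h k := by
    intro k hk
    induction k with
    | zero => rfl
    | succ k ih => rw [flipCount_succ, flipCount_succ, ih (by omega), hs k (by simp; omega)]
  have hstable := flipCount_eq_of_flipStep_eq (h := H s) (K := K) fun k hk => by
    rw [hbelow K le_rfl, (hK K le_rfl).1]
    cases hHk : H s k with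
    | none => simp [flipStep]
    | some v => rw [← hsound s k v hHk, (hK k hk).2]
  rw [hstable s hKs, hbelow K le_rfl, (hK K le_rfl).1]

end FlipCount

open scoped Classical in
theorem evaln_eventually_eq_toOption (c : Code) (n : ℕ) :
    ∀ᶠ s in atTop, evaln s c n = (eval c n).toOption := by
  by_cases hd : (eval c n).Dom
  · obtain ⟨k, hk⟩ := evaln_complete.1 (Part.get_mem hd)
    filter_upwards [eventually_ge_atTop k] with s hs
    rw [hd.toOption]
    exact evaln_mono hs hk
  · refine Eventually.of_forall fun s => ?_
    rw [Part.toOption_eq_none_iff.2 hd, Option.eq_none_iff_forall_ne_some]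
    exact fun v hv => hd (Part.dom_iff_mem.2 ⟨v, evaln_sound hv⟩)

/-! The index `x = ⟪e, ⟪n, b⟫⟫` diagonalizes against the program `e` run on the inputs `⟪x, t⟫`,
allowing `n + 1` flips starting from parity `b`. -/

def diagCode (x : ℕ) : Code := Denumerable.ofNat Code x.unpair.1

def diagCap (x : ℕ) : ℕ := x.unpair.2.unpair.1 + 1

def diagStart (x : ℕ) : ℕ := x.unpair.2.unpair.2

def diagApprox (x s : ℕ) : ℕ :=
  (diagStart x +
    flipCount (diagCap x) (diagStart x) (fun t => evaln s (diagCode x) (Nat.pair x t)) s) % 2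

theorem primrec_flipCount {α : Type*} [Primcodable α] {cap st k : α → ℕ}
    {h : α → ℕ → Option ℕ} (hcap : Primrec cap) (hst : Primrec st) (hh : Primrec₂ h)
    (hk : Primrec k) : Primrec fun a => flipCount (cap a) (st a) (h a) (k a) := by
  have hstep : Primrec₂ fun a (p : ℕ × ℕ) => flipStep (cap a) (st a) p.2 (h a p.1) := by
    have hc : Primrec fun q : α × ℕ × ℕ => q.2.2 := Primrec.snd.comp Primrec.snd
    refine Primrec.ite (PrimrecPred.and (Primrec.nat_lt.comp hc (hcap.comp Primrec.fst))
      (Primrec.eq.comp (hh.comp Primrec.fst (Primrec.fst.comp Primrec.snd))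
        (Primrec.option_some.comp (Primrec.nat_mod.comp
          (Primrec.nat_add.comp (hst.comp Primrec.fst) hc) (Primrec.const 2)))))
      (Primrec.succ.comp hc) hc
  refine (Primrec.nat_rec' hk (Primrec.const 0) hstep).of_eq fun a => ?_
  induction k a with
  | zero => rfl
  | succ k ih => rw [flipCount_succ, ← ih]

theorem diagApprox_computable : Computable₂ diagApprox := by
  have hcode : Primrec diagCode := (Primrec.ofNat Code).comp (Primrec.fst.comp Primrec.unpair)
  have hcap : Primrec diagCap :=
    Primrec.succ.comp (Primrec.fst.comp (Primrec.unpair.comp (Primrec.snd.comp Primrec.unpair)))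
  have hst : Primrec diagStart :=
    Primrec.snd.comp (Primrec.unpair.comp (Primrec.snd.comp Primrec.unpair))
  have heval : Primrec₂ fun (a : ℕ × ℕ) t => evaln a.2 (diagCode a.1) (Nat.pair a.1 t) :=
    primrec_evaln.comp (Primrec.pair
      (Primrec.pair (Primrec.snd.comp Primrec.fst) (hcode.comp (Primrec.fst.comp Primrec.fst)))
      (Primrec₂.natPair.comp (Primrec.fst.comp Primrec.fst) Primrec.snd))
  exact (Primrec.nat_mod.comp (Primrec.nat_add.comp (hst.comp Primrec.fst)
    (primrec_flipCount (hcap.comp Primrec.fst) (hst.comp Primrec.fst) heval Primrec.snd))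
    (Primrec.const 2)).to_comp

open scoped Classical in
theorem diagApprox_eventually_eq (x : ℕ) {c : ℕ}
    (hc : ∀ᶠ k in atTop, flipCount (diagCap x) (diagStart x)
      (fun t => (eval (diagCode x) (Nat.pair x t)).toOption) k = c) :
    ∀ᶠ s in atTop, diagApprox x s = (diagStart x + c) % 2 := by
  refine (eventually_flipCount_stage_eq (fun s k v hv => ?_)
    (fun k => evaln_eventually_eq_toOption _ _) hc).mono fun s hs => by rw [diagApprox, hs]
  exact Part.toOption_eq_some_iff.2 (evaln_sound hv)

theorem diagApprox_converges (x : ℕ) : ∃ v, ∀ᶠ s in atTop, diagApprox x s = v := by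
  classical
  obtain ⟨c, hc⟩ := exists_eventually_flipCount_eq (diagCap x) (diagStart x)
    fun t => (eval (diagCode x) (Nat.pair x t)).toOption
  exact ⟨_, diagApprox_eventually_eq x hc⟩

/-- Whenever `f x` converges to the current guess of `diagApprox x`, the guess flips; so if
both converge to the same value, all `n + 1` flips have happened, each at a value of `f x`. -/
theorem exists_alternates_of_eventually_eq_diagApprox {f : ℕ → ℕ → ℕ} (hf : Computable₂ f)
    (n b : ℕ) : ∃ x, ∀ v, (∀ᶠ s in atTop, f x s = v) → (∀ᶠ s in atTop, diagApprox x s = v) →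
      Alternates (f x) b (n + 1) := by
  classical
  obtain ⟨e, he⟩ : ∃ e : Code, eval e = fun k => Part.some (f k.unpair.1 k.unpair.2) :=
    exists_code.1 (Partrec.nat_iff.1 (hf.comp (Computable.fst.comp Computable.unpair)
      (Computable.snd.comp Computable.unpair)).partrec)
  set x := Nat.pair (Encodable.encode e) (Nat.pair n b)
  have hcode : diagCode x = e := by simp [x, diagCode]
  have hcap : diagCap x = n + 1 := by simp [x, diagCap]
  have hst : diagStart x = b := by simp [x, diagStart]
  have hout : ∀ t, (eval e (Nat.pair x t)).toOption = some (f x t) := by simp [he]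
  refine ⟨x, fun v hfv hdv => ?_⟩
  obtain ⟨c, hc⟩ := exists_eventually_flipCount_eq (n + 1) b
    fun t => (eval e (Nat.pair x t)).toOption
  have hv : v = (b + c) % 2 := by
    have := diagApprox_eventually_eq x (c := c) (by rwa [hcode, hcap, hst])
    obtain ⟨s, hs, hs'⟩ := (hdv.and this).exists
    rw [← hs, hs', hst]
  have hc_eq : c = n + 1 := by
    obtain ⟨k, hk, hfk, hstep⟩ := (hc.and (hfv.and (eventually_flipStep_eq hc))).exists
    have hle := hk ▸ flipCount_le_cap (cap := n + 1) k
    by_contra hne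
    rw [hout, hfk, hv] at hstep
    simp [flipStep, show c < n + 1 by omega] at hstep
  obtain ⟨k, hk⟩ := hc.exists
  rw [← hc_eq, ← hk]
  exact alternates_flipCount hout k

/-- The oscillation hierarchy does not exhaust the limit computable functions:
there is a `Δ⁰₂` function not in any `Σ*ₙ` or `Π*ₙ`. -/
theorem oscillation_hierarchy_not_exhaustive :
    ∃ F : ℕ → ℕ,
      (∃ f : ℕ → ℕ → ℕ, Computable₂ f ∧ ∀ x, ∃ s, ∀ t, s ≤ t → f x t = F x) ∧
      ∀ n : ℕ, ¬ InSigma n F ∧ ¬ InPi n F := by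
  choose F hF using diagApprox_converges
  refine ⟨F, ⟨diagApprox, diagApprox_computable, fun x => eventually_atTop.1 (hF x)⟩,
    fun n => ⟨fun ⟨f, hf, hfF⟩ => ?_, fun ⟨f, hf, hfF⟩ => ?_⟩⟩
  · obtain ⟨x, hx⟩ := exists_alternates_of_eventually_eq_diagApprox hf n 1
    have := (hfF x).1.mod_two_eq_zero_of_alternates
      (hx _ (eventually_atTop.2 (hfF x).2) (hF x))
    omega
  · obtain ⟨x, hx⟩ := exists_alternates_of_eventually_eq_diagApprox hf n 0
    have := (hfF x).1.mod_two_eq_one_of_alternates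
      (hx _ (eventually_atTop.2 (hfF x).2) (hF x))
    omega
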